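/- arXiv:2304.09372 — 3 statements merged into one kernel-verified Lean document; each statement's English description precedes it below -/
import Mathlib

section
/- Let B = Φ(Λ−εI)Φᵀ + εI where Φ is m×κ with orthonormal columns, Λ = diag(λ₁,…,λ_κ), and 0 < ε < λ_k for all k. For any nonempty J ⊆ {1,…,m} and any k, define u = Φ_kᵀ (B − B_{J,·}ᵀ B_{JJ}⁻¹ B_{J,·}) Φ_k and w = u/λ_k. Then 0 ≤ w ≤ 1. -/
/-!
`B` is positive definite. The bordered matrix `[B_JJ, B_J·; B_J·ᵀ, B]` is `B` itself re-indexed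
along `J ⊕ Fin m`, hence positive semidefinite, so its Schur complement
`S = B - B_J·ᵀ B_JJ⁻¹ B_J·` is positive semidefinite; and `B - S` is a congruence of `B_JJ⁻¹`.
Thus `0 ≤ Φ_kᵀ S Φ_k ≤ Φ_kᵀ B Φ_k = λ_k`.
-/

open Matrix

namespace Matrix

theorem IsHermitian.fromBlocks_submatrix_eq_submatrix_sumElim {α n ι : Type*} [Star α]
    {A : Matrix n n α} (hA : A.IsHermitian) (e : ι → n) :
    Matrix.fromBlocks (A.submatrix e e) (A.submatrix e id) (A.submatrix e id)ᴴ A =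
      A.submatrix (Sum.elim e id) (Sum.elim e id) := by
  ext (i | i) (j | j) <;> simp [hA.apply]

section SchurComplement

variable {K n ι : Type*} [Field K] [PartialOrder K] [StarRing K] [Fintype n] [Fintype ι]
  [DecidableEq ι]

theorem PosDef.posSemidef_sub_schurComplement_submatrix [StarOrderedRing K] {A : Matrix n n K}
    (hA : A.PosDef) {e : ι → n} (he : Function.Injective e) :
    (A - (A.submatrix e id)ᴴ * (A.submatrix e e)⁻¹ * A.submatrix e id).PosSemidef := by
  have hAe := hA.submatrix he
  have := hAe.isUnit.invertible
  rw [← hAe.fromBlocks₁₁, hA.isHermitian.fromBlocks_submatrix_eq_submatrix_sumElim]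
  exact hA.posSemidef.submatrix _

theorem PosSemidef.posSemidef_conjTranspose_mul_inv_mul_submatrix {A : Matrix n n K}
    (hA : A.PosSemidef) (e : ι → n) :
    ((A.submatrix e id)ᴴ * (A.submatrix e e)⁻¹ * A.submatrix e id).PosSemidef :=
  (hA.submatrix e).inv.conjTranspose_mul_mul_same _

end SchurComplement

theorem PosSemidef.conjTranspose_mul_mul_apply_self_le_add {R n m : Type*} [CommRing R]
    [PartialOrder R] [StarRing R] [IsOrderedAddMonoid R] [Fintype n] [Fintype m]
    {T : Matrix n n R} (hT : T.PosSemidef) (S : Matrix n n R) (Φ : Matrix n m R) (k : m) :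
    (Φᴴ * S * Φ) k k ≤ (Φᴴ * (S + T) * Φ) k k := by
  simpa [Matrix.mul_add, Matrix.add_mul] using (hT.conjTranspose_mul_mul_same Φ).diag_nonneg

theorem transpose_mul_mul_add_smul_one_mul {R m κ : Type*} [CommRing R] [Fintype m] [Fintype κ]
    [DecidableEq m] [DecidableEq κ] {Φ : Matrix m κ R} (hΦ : Φᵀ * Φ = 1) (D : Matrix κ κ R)
    (c : R) : Φᵀ * (Φ * D * Φᵀ + c • 1) * Φ = D + c • 1 := by
  simp only [Matrix.mul_add, Matrix.add_mul, Matrix.mul_smul, Matrix.smul_mul, Matrix.mul_one,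
    ← Matrix.mul_assoc, hΦ, Matrix.one_mul]
  rw [Matrix.mul_assoc, hΦ, Matrix.mul_one]

end Matrix

theorem stmt_4_general (m κ : ℕ) (Φ : Matrix (Fin m) (Fin κ) ℝ)
    (hΦ : Φᵀ * Φ = 1) (ε : ℝ) (hε : 0 < ε) (lam : Fin κ → ℝ)
    (hlam : ∀ k, ε < lam k)
    (B : Matrix (Fin m) (Fin m) ℝ)
    (hB : B = Φ * Matrix.diagonal (fun k => lam k - ε) * Φᵀ + ε • (1 : Matrix (Fin m) (Fin m) ℝ))
    (J : Finset (Fin m))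
    (BJ : Matrix {i // i ∈ J} (Fin m) ℝ)
    (hBJ : BJ = B.submatrix (Subtype.val : {i // i ∈ J} → Fin m) id)
    (BJJ : Matrix {i // i ∈ J} {i // i ∈ J} ℝ)
    (hBJJ : BJJ = B.submatrix (Subtype.val : {i // i ∈ J} → Fin m)
      (Subtype.val : {i // i ∈ J} → Fin m))
    (k : Fin κ) (u w : ℝ)
    (hu : u = (Φᵀ * (B - BJᵀ * BJJ⁻¹ * BJ) * Φ) k k)
    (hw : w = u / lam k) :
    0 ≤ w ∧ w ≤ 1 := by
  have hlam_pos : 0 < lam k := hε.trans (hlam k)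
  have hB_posDef : B.PosDef := by
    rw [hB, ← conjTranspose_eq_transpose_of_trivial]
    exact .posSemidef_add ((PosSemidef.diagonal fun i => (sub_pos.2 (hlam i)).le)
      |>.mul_mul_conjTranspose_same Φ) (PosDef.one.smul hε)
  have hS := hB_posDef.posSemidef_sub_schurComplement_submatrix
    (Subtype.val_injective : Function.Injective (Subtype.val : {i // i ∈ J} → Fin m))
  have hT := hB_posDef.posSemidef.posSemidef_conjTranspose_mul_inv_mul_submatrix
    (Subtype.val : {i // i ∈ J} → Fin m)
  rw [← hBJ, ← hBJJ, conjTranspose_eq_transpose_of_trivial] at hS hT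
  have hB_diag : (Φᵀ * B * Φ) k k = lam k := by
    simp [hB, transpose_mul_mul_add_smul_one_mul hΦ]
  have hu_nonneg : 0 ≤ u := by
    rw [hu]
    simpa [conjTranspose_eq_transpose_of_trivial] using
      (hS.conjTranspose_mul_mul_same Φ).diag_nonneg
  have hu_le : u ≤ lam k := by
    simpa [conjTranspose_eq_transpose_of_trivial, ← hu, hB_diag] using
      hT.conjTranspose_mul_mul_apply_self_le_add (B - BJᵀ * BJJ⁻¹ * BJ) Φ k
  rw [hw]
  exact ⟨div_nonneg hu_nonneg hlam_pos.le, div_le_one_of_le₀ hu_le hlam_pos.le⟩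

theorem stmt_4 (m κ : ℕ) (Φ : Matrix (Fin m) (Fin κ) ℝ)
    (hΦ : Φᵀ * Φ = 1) (ε : ℝ) (hε : 0 < ε) (lam : Fin κ → ℝ)
    (hlam : ∀ k, ε < lam k)
    (B : Matrix (Fin m) (Fin m) ℝ)
    (hB : B = Φ * Matrix.diagonal (fun k => lam k - ε) * Φᵀ + ε • (1 : Matrix (Fin m) (Fin m) ℝ))
    (J : Finset (Fin m)) (hJ : J.Nonempty)
    (BJ : Matrix {i // i ∈ J} (Fin m) ℝ)
    (hBJ : BJ = B.submatrix (Subtype.val : {i // i ∈ J} → Fin m) id)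
    (BJJ : Matrix {i // i ∈ J} {i // i ∈ J} ℝ)
    (hBJJ : BJJ = B.submatrix (Subtype.val : {i // i ∈ J} → Fin m)
      (Subtype.val : {i // i ∈ J} → Fin m))
    (k : Fin κ) (u w : ℝ)
    (hu : u = (Φᵀ * (B - BJᵀ * BJJ⁻¹ * BJ) * Φ) k k)
    (hw : w = u / lam k) :
    0 ≤ w ∧ w ≤ 1 :=
  stmt_4_general m κ Φ hΦ ε hε lam hlam B hB J BJ hBJ BJJ hBJJ k u w hu hw
end

section
/- (Ignorance of missing rows, mean part) Let R be an n×n symmetric positive definite matrix, partition indices into Q = {1,…,t} and S = {t+1,…,n}, let D be diagonal with nonnegative entries supported on Q, and let r ∈ ℝⁿ, g ∈ ℝⁿ. Then as η → ∞, rᵀ (R + D + η S̃S̃ᵀ)⁻¹ g → r_Qᵀ ((R+D)_{QQ})⁻¹ g_Q, where S̃ = [0; I_{n−t}]. -/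
/-!
Write `A = R + D = [[a, b], [c, d]]` and `P = [[0, 0], [0, 1]]`. With `ε = η⁻¹` and
`J ε = [[1, 0], [0, √ε]]`, the conjugate `J ε (A + η P) J ε = [[a, √ε b], [√ε c, ε d + 1]]` depends
continuously on `ε` and is invertible at `ε = 0` because `a = (R + D)_QQ` is positive definite.
Hence `(A + η P)⁻¹ = J ε (J ε (A + η P) J ε)⁻¹ J ε` tends to
`J 0 [[a⁻¹, 0], [0, 1]] J 0 = [[a⁻¹, 0], [0, 0]]`.
-/

open Matrix Filter Topology

namespace Matrix

variable {m n : Type*} [Fintype m] [Fintype n]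

theorem dotProduct_fromBlocks_zero_mulVec (a : Matrix m m ℝ) (r g : m ⊕ n → ℝ) :
    r ⬝ᵥ (fromBlocks a 0 0 0 *ᵥ g) = (r ∘ Sum.inl) ⬝ᵥ (a *ᵥ (g ∘ Sum.inl)) := by
  rw [← Sum.elim_comp_inl_inr g, ← Sum.elim_comp_inl_inr r, fromBlocks_mulVec,
    sumElim_dotProduct_sumElim]
  simp

variable [DecidableEq m] [DecidableEq n]

theorem fromBlocks_sqrt_mul_add_inv_smul_mul_fromBlocks_sqrt {ε : ℝ} (hε : 0 < ε)
    (a : Matrix m m ℝ) (b : Matrix m n ℝ) (c : Matrix n m ℝ) (d : Matrix n n ℝ) :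
    fromBlocks 1 0 0 (√ε • 1) * (fromBlocks a b c d + ε⁻¹ • fromBlocks 0 0 0 1) *
        fromBlocks 1 0 0 (√ε • 1) =
      fromBlocks a (√ε • b) (√ε • c) (ε • d + 1) := by
  have hsq : √ε * √ε = ε := Real.mul_self_sqrt hε.le
  rw [fromBlocks_smul, fromBlocks_add, fromBlocks_multiply, fromBlocks_multiply]
  simp only [Matrix.one_mul, Matrix.mul_one, Matrix.zero_mul, Matrix.mul_zero, add_zero,
    zero_add, smul_zero, Matrix.mul_smul, Matrix.smul_mul, smul_smul, hsq]
  rw [smul_add, smul_smul, mul_inv_cancel₀ hε.ne', one_smul]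

theorem tendsto_inv_fromBlocks_add_smul_atTop (a : Matrix m m ℝ) (b : Matrix m n ℝ)
    (c : Matrix n m ℝ) (d : Matrix n n ℝ) (ha : IsUnit a) :
    Tendsto (fun η : ℝ => (fromBlocks a b c d + η • fromBlocks 0 0 0 1)⁻¹) atTop
      (𝓝 (fromBlocks a⁻¹ 0 0 0)) := by
  set J : ℝ → Matrix (m ⊕ n) (m ⊕ n) ℝ := fun ε => fromBlocks 1 0 0 (√ε • 1)
  set F : ℝ → Matrix (m ⊕ n) (m ⊕ n) ℝ := fun ε => fromBlocks a (√ε • b) (√ε • c) (ε • d + 1)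
  have hF0 : F 0 = fromBlocks a 0 0 1 := by simp [F]
  have hinv : ContinuousAt Inv.inv (F 0) := by
    refine continuousAt_matrix_inv _ ?_
    rw [Ring.inverse_eq_inv']
    refine continuousAt_inv₀ ?_
    rw [hF0, det_fromBlocks_zero₂₁, det_one, mul_one]
    exact ((isUnit_iff_isUnit_det a).mp ha).ne_zero
  have hlim0 : J 0 * (F 0)⁻¹ * J 0 = fromBlocks a⁻¹ 0 0 0 := by
    rw [hF0, inv_fromBlocks_zero₂₁_of_isUnit_iff _ _ _ (by simp [ha])]
    simp [J, fromBlocks_multiply]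
  have hlim : Tendsto (fun ε => J ε * (F ε)⁻¹ * J ε) (𝓝 0) (𝓝 (fromBlocks a⁻¹ 0 0 0)) := by
    have hF : Continuous F := by fun_prop
    have hJ : Continuous J := by fun_prop
    exact hlim0 ▸ ((hJ.continuousAt.mul (hinv.comp hF.continuousAt)).mul hJ.continuousAt).tendsto
  refine (hlim.comp tendsto_inv_atTop_zero).congr' ?_
  filter_upwards [eventually_gt_atTop 0] with η hη
  have hJ : IsUnit (J η⁻¹).det := by
    simp [J, det_fromBlocks_zero₂₁, (Real.sqrt_pos.2 hη).ne']
  have key : J η⁻¹ * (fromBlocks a b c d + η • fromBlocks 0 0 0 1) * J η⁻¹ = F η⁻¹ := by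
    have h := fromBlocks_sqrt_mul_add_inv_smul_mul_fromBlocks_sqrt (inv_pos.mpr hη) a b c d
    rwa [inv_inv] at h
  rw [Function.comp_apply, ← key, Matrix.mul_inv_rev, Matrix.mul_inv_rev, ← Matrix.mul_assoc,
    ← Matrix.mul_assoc, mul_nonsing_inv _ hJ, Matrix.one_mul]
  exact nonsing_inv_mul_cancel_right _ _ hJ

end Matrix

theorem stmt_15 (t s : ℕ)
    (R : Matrix (Fin t ⊕ Fin s) (Fin t ⊕ Fin s) ℝ) (hR : R.PosDef)
    (d : Fin t → ℝ) (hd : ∀ i, 0 ≤ d i)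
    (D : Matrix (Fin t ⊕ Fin s) (Fin t ⊕ Fin s) ℝ)
    (hD : D = Matrix.fromBlocks (Matrix.diagonal d) 0 0 0)
    (P : Matrix (Fin t ⊕ Fin s) (Fin t ⊕ Fin s) ℝ)
    (hP : P = Matrix.fromBlocks 0 0 0 (1 : Matrix (Fin s) (Fin s) ℝ))
    (r g : Fin t ⊕ Fin s → ℝ) :
    Tendsto (fun η : ℝ => r ⬝ᵥ ((R + D + η • P)⁻¹ *ᵥ g)) atTop
      (nhds ((r ∘ Sum.inl) ⬝ᵥ
        (((R + D).submatrix Sum.inl Sum.inl)⁻¹ *ᵥ (g ∘ Sum.inl)))) := by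
  have hD_psd : D.PosSemidef := by
    rw [hD, ← diagonal_zero, fromBlocks_diagonal, posSemidef_diagonal_iff]
    rintro (i | i) <;> simp [hd]
  have hQ : ((R + D).submatrix Sum.inl Sum.inl).PosDef :=
    (hR.add_posSemidef hD_psd).submatrix Sum.inl_injective
  have hinv : Tendsto (fun η : ℝ => (R + D + η • P)⁻¹) atTop
      (𝓝 (fromBlocks ((R + D).submatrix Sum.inl Sum.inl)⁻¹ 0 0 0)) := by
    -- `toBlocks₁₁` and `submatrix Sum.inl Sum.inl` agree definitionally, which closes the `rwa`.
    have h := tendsto_inv_fromBlocks_add_smul_atTop (R + D).toBlocks₁₁ (R + D).toBlocks₁₂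
      (R + D).toBlocks₂₁ (R + D).toBlocks₂₂ hQ.isUnit
    rwa [fromBlocks_toBlocks, ← hP] at h
  have hφ : Continuous fun N : Matrix (Fin t ⊕ Fin s) (Fin t ⊕ Fin s) ℝ => r ⬝ᵥ (N *ᵥ g) := by
    fun_prop
  simpa only [Function.comp_def, dotProduct_fromBlocks_zero_mulVec] using
    (hφ.tendsto _).comp hinv
end

section
/- (Ignorance of missing rows, variance part) With the same setting as above, as η → ∞, the quantity ρ − rᵀ (R + D + η S̃S̃ᵀ)⁻¹ r converges to ρ − r_Qᵀ ((R+D)_{QQ})⁻¹ r_Q for any real ρ; i.e., the GP predictive variance using all n rows with penalty η on the set S converges to the predictive variance computed using only the rows in Q. -/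
/-! Write `R + D = [[A, B], [C, E]]` in blocks over `Q ⊕ S`; `A` is positive definite, hence
invertible. The Schur complement formula expresses `(R + D + ηP)⁻¹` as a continuous function of
`(Z + η I)⁻¹`, where `Z = E - C A⁻¹ B`, and at `0` this function is the block matrix with `A⁻¹` in
the corner and zeros elsewhere. Since `(Z + η I)⁻¹ = η⁻¹ (I + η⁻¹ Z)⁻¹ → 0`, the inverse tends
to `[[A⁻¹, 0], [0, 0]]`, and the quadratic form in `r` tends to `r_Qᵀ A⁻¹ r_Q`. -/

open Matrix Filter Topology

namespace Matrix

variable {m n : Type*} [DecidableEq m] [DecidableEq n]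

theorem add_smul_one_eq_smul (S : Matrix n n ℝ) {η : ℝ} (hη : η ≠ 0) :
    S + η • (1 : Matrix n n ℝ) = η • (1 + η⁻¹ • S) := by
  rw [smul_add, smul_smul, mul_inv_cancel₀ hη, one_smul, add_comm]

variable [Fintype m] [Fintype n]

theorem inv_fromBlocks₁₁_eq {α : Type*} [CommRing α] {A : Matrix m m α} (B : Matrix m n α)
    (C : Matrix n m α) (D : Matrix n n α) (hA : IsUnit A) (hS : IsUnit (D - C * A⁻¹ * B)) :
    (fromBlocks A B C D)⁻¹ =
      fromBlocks (A⁻¹ + A⁻¹ * B * (D - C * A⁻¹ * B)⁻¹ * C * A⁻¹)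
        (-(A⁻¹ * B * (D - C * A⁻¹ * B)⁻¹)) (-((D - C * A⁻¹ * B)⁻¹ * C * A⁻¹))
        (D - C * A⁻¹ * B)⁻¹ := by
  have := hA.invertible
  have : Invertible (D - C * ⅟A * B) := by rw [invOf_eq_nonsing_inv]; exact hS.invertible
  have := fromBlocks₁₁Invertible A B C D
  simpa only [invOf_eq_nonsing_inv] using invOf_fromBlocks₁₁_eq A B C D

theorem eventually_isUnit_one_add_smul (S : Matrix n n ℝ) :
    ∀ᶠ ε in 𝓝 (0 : ℝ), IsUnit (1 + ε • S) := by
  have hdet : ContinuousAt (fun ε : ℝ => (1 + ε • S).det) 0 := by fun_prop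
  filter_upwards [hdet.eventually_ne (by simp : (1 + (0 : ℝ) • S).det ≠ 0)] with ε hε
  exact (isUnit_iff_isUnit_det _).2 hε.isUnit

theorem eventually_isUnit_add_smul_one (S : Matrix n n ℝ) :
    ∀ᶠ η : ℝ in atTop, IsUnit (S + η • (1 : Matrix n n ℝ)) := by
  filter_upwards
    [(tendsto_inv_atTop_zero (𝕜 := ℝ)).eventually (eventually_isUnit_one_add_smul S),
      eventually_gt_atTop 0] with η hunit hη
  rw [add_smul_one_eq_smul S hη.ne']
  exact hunit.smul (Units.mk0 η hη.ne')

theorem tendsto_inv_add_smul_one_atTop (S : Matrix n n ℝ) :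
    Tendsto (fun η : ℝ => (S + η • (1 : Matrix n n ℝ))⁻¹) atTop (𝓝 0) := by
  have hcont : ContinuousAt (fun ε : ℝ => ε • (1 + ε • S)⁻¹) 0 := by
    refine continuousAt_id.smul (ContinuousAt.comp (g := Inv.inv) ?_ (by fun_prop))
    simpa using continuousAt_matrix_inv (1 : Matrix n n ℝ)
      (by simp [continuousAt_inv₀ one_ne_zero])
  have h := hcont.tendsto.comp tendsto_inv_atTop_zero
  rw [zero_smul] at h
  refine h.congr' ?_
  filter_upwards
    [(tendsto_inv_atTop_zero (𝕜 := ℝ)).eventually (eventually_isUnit_one_add_smul S),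
      eventually_gt_atTop 0] with η hunit hη
  rw [Function.comp_apply, add_smul_one_eq_smul S hη.ne']
  exact (inv_smul' _ (Units.mk0 η hη.ne') ((isUnit_iff_isUnit_det _).1 hunit)).symm

theorem tendsto_inv_fromBlocks_add_smul_one {A : Matrix m m ℝ} (B : Matrix m n ℝ)
    (C : Matrix n m ℝ) (D : Matrix n n ℝ) (hA : IsUnit A) :
    Tendsto (fun η : ℝ => (fromBlocks A B C (D + η • 1))⁻¹) atTop
      (𝓝 (fromBlocks A⁻¹ 0 0 0)) := by
  set S := D - C * A⁻¹ * B
  let F : Matrix n n ℝ → Matrix (m ⊕ n) (m ⊕ n) ℝ := fun X =>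
    fromBlocks (A⁻¹ + A⁻¹ * B * X * C * A⁻¹) (-(A⁻¹ * B * X)) (-(X * C * A⁻¹)) X
  have hF : Continuous F := by fun_prop
  have h := (hF.tendsto 0).comp (tendsto_inv_add_smul_one_atTop S)
  simp only [F, Matrix.mul_zero, Matrix.zero_mul, add_zero, neg_zero] at h
  refine h.congr' ?_
  filter_upwards [eventually_isUnit_add_smul_one S] with η hη
  have hS : D + η • 1 - C * A⁻¹ * B = S + η • 1 := add_sub_right_comm _ _ _
  rw [inv_fromBlocks₁₁_eq B C _ hA (hS ▸ hη), hS]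
  rfl

end Matrix

theorem Matrix.add_smul_fromBlocks_zero_one {α m n : Type*} [Semiring α] [DecidableEq n]
    (M : Matrix (m ⊕ n) (m ⊕ n) α) (η : α) :
    M + η • fromBlocks 0 0 0 (1 : Matrix n n α) =
      fromBlocks M.toBlocks₁₁ M.toBlocks₁₂ M.toBlocks₂₁ (M.toBlocks₂₂ + η • 1) := by
  conv_lhs => rw [← fromBlocks_toBlocks M]
  simp [fromBlocks_smul, fromBlocks_add]

theorem stmt_16 (t s : ℕ)
    (R : Matrix (Fin t ⊕ Fin s) (Fin t ⊕ Fin s) ℝ) (hR : R.PosDef)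
    (d : Fin t → ℝ) (hd : ∀ i, 0 ≤ d i)
    (D : Matrix (Fin t ⊕ Fin s) (Fin t ⊕ Fin s) ℝ)
    (hD : D = Matrix.fromBlocks (Matrix.diagonal d) 0 0 0)
    (P : Matrix (Fin t ⊕ Fin s) (Fin t ⊕ Fin s) ℝ)
    (hP : P = Matrix.fromBlocks 0 0 0 (1 : Matrix (Fin s) (Fin s) ℝ))
    (r : Fin t ⊕ Fin s → ℝ) (ρ : ℝ) :
    Tendsto (fun η : ℝ => ρ - r ⬝ᵥ ((R + D + η • P)⁻¹ *ᵥ r)) atTop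
      (nhds (ρ - (r ∘ Sum.inl) ⬝ᵥ
        (((R + D).submatrix Sum.inl Sum.inl)⁻¹ *ᵥ (r ∘ Sum.inl)))) := by
  set M := R + D
  have hM₁₁ : M.toBlocks₁₁ = R.submatrix Sum.inl Sum.inl + diagonal d := by
    ext i j
    simp [M, hD, toBlocks₁₁]
  have hA : IsUnit M.toBlocks₁₁ := by
    rw [hM₁₁]
    exact ((hR.submatrix Sum.inl_injective).add_posSemidef
      (posSemidef_diagonal_iff.2 hd)).isUnit
  have hinv := tendsto_inv_fromBlocks_add_smul_one M.toBlocks₁₂ M.toBlocks₂₁ M.toBlocks₂₂ hA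
  have hquad : Continuous fun X : Matrix (Fin t ⊕ Fin s) (Fin t ⊕ Fin s) ℝ => r ⬝ᵥ (X *ᵥ r) := by
    fun_prop
  have hlimit : r ⬝ᵥ (fromBlocks M.toBlocks₁₁⁻¹ 0 0 0 *ᵥ r) =
      (r ∘ Sum.inl) ⬝ᵥ (M.toBlocks₁₁⁻¹ *ᵥ (r ∘ Sum.inl)) := by
    simp [fromBlocks_mulVec, dotProduct_block]
  have h := ((hquad.tendsto _).comp hinv).const_sub ρ
  rw [hlimit] at h
  simp only [hP, add_smul_fromBlocks_zero_one]
  exact h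
end
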